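/- arXiv:2308.09050 — 2 statements merged into one kernel-verified Lean document; each statement's English description precedes it below -/
import Mathlib

section
/- If f : ℝ → ℝ is C² with polynomial growth and lim_{|x|→∞} f(x) = +∞, then F(μ,σ) → +∞ as |μ| + σ → +∞, where F(μ,σ) = ∫ f(x) Γ_{μ,σ}(x) dx. -/
open Real MeasureTheory Filter Topology

noncomputable def gauss (μ σ x : ℝ) : ℝ :=
  Real.exp (-(x - μ)^2 / (2 * σ^2)) / (Real.sqrt (2 * Real.pi) * σ)

noncomputable def relaxF (f : ℝ → ℝ) (μ σ : ℝ) : ℝ := ∫ x : ℝ, f x * gauss μ σ x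

def PolyGrowth (f : ℝ → ℝ) : Prop :=
  ∃ m : ℝ, 0 < m ∧ Tendsto (fun x : ℝ => f x / |x| ^ m) (cocompact ℝ) (𝓝 0)

/-! Under `N(μ, σ²)` the relaxation `F(μ, σ)` is the expectation of `f`, which exists by polynomial
growth. A coercive continuous `f` is bounded below by some `B` and exceeds `K` outside some
`[-R, R]`, so `F ≥ K - (K - B) · P([-R, R])`. The Gaussian density is at most `2 / (σ + |x - μ|)`
(from `exp (-t) ≤ 1 / (1 + t)`), so `P([-R, R]) ≤ 4R / (|μ| + σ - R)`, which tends to `0` as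
`|μ| + σ → ∞`. -/

open ProbabilityTheory NNReal Set

lemma PolyGrowth.exists_abs_le_const_add_rpow {f : ℝ → ℝ} (hg : PolyGrowth f)
    (hf : Continuous f) : ∃ m C : ℝ, 0 < m ∧ ∀ x, |f x| ≤ C + |x| ^ m := by
  obtain ⟨m, hm, hlim⟩ := hg
  have hpow : Continuous fun x : ℝ => |x| ^ m :=
    continuous_abs.rpow_const fun _ => Or.inr hm.le
  have hev : ∀ᶠ x in cocompact ℝ, |f x| - |x| ^ m ≤ |f 0| - |0| ^ m := by
    filter_upwards [(hlim.abs.eventually (gt_mem_nhds (by simp : |(0 : ℝ)| < 1))),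
      tendsto_norm_cocompact_atTop.eventually_ge_atTop 1] with x hx hx1
    have hxm : 0 < |x| ^ m := rpow_pos_of_pos (one_pos.trans_le hx1) m
    rw [abs_div, abs_of_pos hxm, div_lt_one hxm] at hx
    simp only [abs_zero, Real.zero_rpow hm.ne', sub_zero]
    linarith [abs_nonneg (f 0)]
  obtain ⟨x₀, hx₀⟩ :=
    Continuous.exists_forall_ge' (f := fun x => |f x| - |x| ^ m) (hf.abs.sub hpow) 0 hev
  exact ⟨m, |f x₀| - |x₀| ^ m, hm, fun x => by linarith [hx₀ x]⟩

lemma integrable_gaussianReal_of_abs_le_const_add_rpow {f : ℝ → ℝ} {μ : ℝ} {v : ℝ≥0}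
    (hf : AEStronglyMeasurable f (gaussianReal μ v)) {C m : ℝ} (hm : 0 < m)
    (hbd : ∀ x, |f x| ≤ C + |x| ^ m) : Integrable f (gaussianReal μ v) := by
  have hmom : Integrable (fun x : ℝ => |x| ^ m) (gaussianReal μ v) := by
    have := (memLp_id_gaussianReal' (μ := μ) (v := v) (ENNReal.ofReal m)
      ENNReal.ofReal_ne_top).integrable_norm_rpow (by simpa using hm) ENNReal.ofReal_ne_top
    simpa [ENNReal.toReal_ofReal hm.le] using this
  exact ((integrable_const C).add hmom).mono' hf (ae_of_all _ hbd)

lemma gaussianPDFReal_le_two_div (μ : ℝ) {v : ℝ≥0} (hv : v ≠ 0) (x : ℝ) :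
    gaussianPDFReal μ v x ≤ 2 / (√v + |x - μ|) := by
  set s := √(v : ℝ)
  set u := |x - μ|
  have hs : 0 < s := Real.sqrt_pos.2 (by positivity)
  have hv' : (v : ℝ) = s ^ 2 := (sq_sqrt v.2).symm
  have hnorm : s ≤ √(2 * π * v) := by
    rw [sqrt_mul (by positivity)]
    exact le_mul_of_one_le_left hs.le
      (one_le_sqrt.2 (by nlinarith [pi_gt_three]))
  have hexp : rexp (-(x - μ) ^ 2 / (2 * v)) ≤ (1 + u ^ 2 / (2 * s ^ 2))⁻¹ := by
    rw [← sq_abs, neg_div, exp_neg, hv']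
    exact inv_anti₀ (by positivity) (add_one_le_exp _ |>.trans_eq' (add_comm _ _))
  calc gaussianPDFReal μ v x
      ≤ s⁻¹ * (1 + u ^ 2 / (2 * s ^ 2))⁻¹ := by
        rw [gaussianPDFReal]
        gcongr
    _ = 2 * s / (2 * s ^ 2 + u ^ 2) := by field_simp
    _ ≤ 2 / (s + u) := by
        rw [div_le_div_iff₀ (by positivity) (by positivity)]
        nlinarith [sq_nonneg (s - u)]

lemma measureReal_gaussianReal_Icc_le (μ : ℝ) {v : ℝ≥0} (hv : v ≠ 0) {R : ℝ} (hR : 0 ≤ R)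
    (hRμ : R < √v + |μ|) :
    (gaussianReal μ v).real (Icc (-R) R) ≤ 4 * R / (√v + |μ| - R) := by
  have hpdf : ∀ x ∈ Icc (-R) R, ‖gaussianPDFReal μ v x‖ ≤ 2 / (√v + |μ| - R) := by
    intro x hx
    rw [norm_of_nonneg (gaussianPDFReal_nonneg μ v x)]
    refine (gaussianPDFReal_le_two_div μ hv x).trans
      (div_le_div_of_nonneg_left zero_le_two (by linarith) ?_)
    have := abs_sub_abs_le_abs_sub μ x
    rw [abs_sub_comm μ] at this
    linarith [abs_le.2 ⟨hx.1, hx.2⟩]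
  calc (gaussianReal μ v).real (Icc (-R) R)
      = ‖∫ x in Icc (-R) R, gaussianPDFReal μ v x‖ := by
        rw [measureReal_def, gaussianReal_apply_eq_integral μ hv, ENNReal.toReal_ofReal
          (setIntegral_nonneg measurableSet_Icc fun x _ => gaussianPDFReal_nonneg μ v x),
          norm_of_nonneg (setIntegral_nonneg measurableSet_Icc
            fun x _ => gaussianPDFReal_nonneg μ v x)]
    _ ≤ 2 / (√v + |μ| - R) * volume.real (Icc (-R) R) :=
        norm_setIntegral_le_of_norm_le_const measure_Icc_lt_top hpdf
    _ = 4 * R / (√v + |μ| - R) := by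
        rw [Real.volume_real_Icc_of_le (by linarith)]
        ring

lemma sub_mul_measureReal_le_integral {α : Type*} [MeasurableSpace α] {P : Measure α}
    [IsProbabilityMeasure P] {f : α → ℝ} (hf : Integrable f P) {s : Set α}
    (hs : MeasurableSet s) {B K : ℝ} (hB : ∀ x ∈ s, B ≤ f x) (hK : ∀ x ∉ s, K ≤ f x) :
    K - (K - B) * P.real s ≤ ∫ x, f x ∂P := by
  have hle : ∀ x, K - s.indicator (fun _ => K - B) x ≤ f x := by
    intro x
    by_cases hx : x ∈ s
    · simp [hx, hB x hx]
    · simp [hx, hK x hx]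
  calc K - (K - B) * P.real s = ∫ x, (K - s.indicator (fun _ => K - B) x) ∂P := by
        rw [integral_sub (integrable_const K) ((integrable_const _).indicator hs),
          integral_const, integral_indicator_const _ hs]
        simp [mul_comm]
    _ ≤ ∫ x, f x ∂P :=
        integral_mono ((integrable_const K).sub ((integrable_const _).indicator hs)) hf hle

lemma relaxF_eq_integral_gaussianReal (f : ℝ → ℝ) (μ : ℝ) {σ : ℝ} (hσ : 0 < σ) :
    relaxF f μ σ = ∫ x, f x ∂gaussianReal μ (σ ^ 2).toNNReal := by
  have hv : (σ ^ 2).toNNReal ≠ 0 := by simp [hσ.ne']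
  rw [integral_gaussianReal_eq_integral_smul hv, relaxF]
  congr 1 with x
  rw [gaussianPDFReal, Real.coe_toNNReal _ (sq_nonneg σ),
    sqrt_mul (by positivity : (0 : ℝ) ≤ 2 * π), sqrt_sq hσ.le, gauss, smul_eq_mul]
  ring

theorem stmt2 (f : ℝ → ℝ) (hf : ContDiff ℝ 2 f) (hg : PolyGrowth f)
    (hcoer : Tendsto f (cocompact ℝ) atTop) :
    ∀ M : ℝ, ∃ A : ℝ, ∀ μ σ : ℝ, 0 < σ → A < |μ| + σ → M < relaxF f μ σ := by
  intro M
  have hfc : Continuous f := hf.continuous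
  obtain ⟨m, C, hm, hbd⟩ := hg.exists_abs_le_const_add_rpow hfc
  obtain ⟨x₀, hx₀⟩ := hfc.exists_forall_le hcoer
  set B := min (f x₀) M
  have hKB : 0 ≤ M + 1 - B := by linarith [min_le_right (f x₀) M]
  obtain ⟨R, hR0, hR⟩ := ((atTop_basis' 0).cobounded_of_norm (E := ℝ)).eventually_iff.1
    (Metric.cobounded_eq_cocompact (α := ℝ) ▸ hcoer.eventually_ge_atTop (M + 1))
  refine ⟨R + 4 * R * (M + 1 - B), fun μ σ hσ hA => ?_⟩
  set P := gaussianReal μ (σ ^ 2).toNNReal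
  have hsqrt : √((σ ^ 2).toNNReal : ℝ) = σ := by
    rw [Real.coe_toNNReal _ (sq_nonneg σ), sqrt_sq hσ.le]
  have hlower : M + 1 - (M + 1 - B) * P.real (Icc (-R) R) ≤ ∫ x, f x ∂P :=
    sub_mul_measureReal_le_integral
      (integrable_gaussianReal_of_abs_le_const_add_rpow hfc.aestronglyMeasurable hm hbd)
      measurableSet_Icc (fun x _ => (min_le_left _ _).trans (hx₀ x))
      (fun x hx => hR (le_of_not_ge fun h => hx (abs_le.1 h)))
  have hgap : 4 * R * (M + 1 - B) < σ + |μ| - R := by linarith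
  have hmass : P.real (Icc (-R) R) ≤ 4 * R / (σ + |μ| - R) := by
    have := measureReal_gaussianReal_Icc_le μ (v := (σ ^ 2).toNNReal) (by simp [hσ.ne'])
      hR0 (by rw [hsqrt]; nlinarith)
    rwa [hsqrt] at this
  have hsmall : (M + 1 - B) * P.real (Icc (-R) R) < 1 :=
    calc (M + 1 - B) * P.real (Icc (-R) R) ≤ (M + 1 - B) * (4 * R / (σ + |μ| - R)) :=
          mul_le_mul_of_nonneg_left hmass hKB
      _ < 1 := by
          rw [← mul_div_assoc, div_lt_one (by nlinarith)]
          linarith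
  rw [relaxF_eq_integral_gaussianReal f μ hσ]
  linarith
end

section
/- Let q be the quadratic polynomial minimizing ∫ |q - f|² Γ_{μ₀,σ₀} dx over all polynomials of degree at most 2. Then ∇F(μ₀, σ₀) = ∇F^q(μ₀, σ₀), where F and F^q are the relaxed functionals of f and q respectively. -/
/-!
Differentiating under the integral sign, `∂_μ F` and `∂_σ F` at `(μ₀, σ₀)` are the integrals of
`f · s · Γ_{μ₀,σ₀}`, where `s = ∂ log Γ` is the corresponding score, a polynomial of degree at
most 2 in `x`. The least-squares optimality of `q` says precisely that `f` and `q` have the same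
integrals against such weights. Differentiation under the integral is justified because, for
parameters near `(μ₀, σ₀)`, the integrands are dominated by a polynomial times one fixed Gaussian.
-/

open Real MeasureTheory Filter Topology

open Polynomial Set

lemma one_add_abs_le_mul_one_add_abs_sub (x y : ℝ) : 1 + |x| ≤ (1 + |y|) * (1 + |x - y|) := by
  nlinarith [abs_sub_abs_le_abs_sub x y, abs_nonneg y, abs_nonneg (x - y)]

lemma abs_sub_le_mul_one_add_abs (x y : ℝ) : |x - y| ≤ (1 + |y|) * (1 + |x|) := by
  nlinarith [abs_sub x y, abs_nonneg y, abs_nonneg x]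

lemma integrable_one_add_abs_pow_mul_exp_neg_mul_sq {b : ℝ} (hb : 0 < b) (n : ℕ) :
    Integrable fun x : ℝ => (1 + |x|) ^ n * exp (-b * x ^ 2) := by
  have hpow : Integrable fun x : ℝ => x ^ n * exp (-b * x ^ 2) := by
    simpa [Real.rpow_natCast] using
      integrable_rpow_mul_exp_neg_mul_sq hb (s := n) (by linarith [n.cast_nonneg (α := ℝ)])
  refine (((integrable_exp_neg_mul_sq hb).add hpow.abs).const_mul (2 ^ (n - 1))).mono'
    (by fun_prop) (ae_of_all _ fun x => ?_)
  rw [norm_of_nonneg (by positivity), Pi.add_apply, abs_mul, abs_pow, abs_of_pos (exp_pos _)]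
  calc (1 + |x|) ^ n * exp (-b * x ^ 2) ≤ 2 ^ (n - 1) * (1 ^ n + |x| ^ n) * exp (-b * x ^ 2) := by
        gcongr; exact add_pow_le zero_le_one (abs_nonneg x) n
    _ = _ := by ring

lemma integrable_one_add_abs_pow_mul_exp_neg_mul_sub_sq {b : ℝ} (hb : 0 < b) (n : ℕ) (μ : ℝ) :
    Integrable fun x : ℝ => (1 + |x|) ^ n * exp (-b * (x - μ) ^ 2) := by
  refine (((integrable_one_add_abs_pow_mul_exp_neg_mul_sq hb n).comp_sub_right μ).const_mul
    ((1 + |μ|) ^ n)).mono' (by fun_prop) (ae_of_all _ fun x => ?_)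
  rw [norm_of_nonneg (by positivity), ← mul_assoc, ← mul_pow]
  gcongr
  exact one_add_abs_le_mul_one_add_abs_sub x μ

def PolyBounded (g : ℝ → ℝ) : Prop := ∃ C : ℝ, ∃ n : ℕ, ∀ x, |g x| ≤ C * (1 + |x|) ^ n

lemma PolyBounded.mul {g h : ℝ → ℝ} (hg : PolyBounded g) (hh : PolyBounded h) :
    PolyBounded fun x => g x * h x := by
  obtain ⟨C, n, hC⟩ := hg
  obtain ⟨D, k, hD⟩ := hh
  refine ⟨C * D, n + k, fun x => ?_⟩
  rw [abs_mul, pow_add, mul_mul_mul_comm]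
  exact mul_le_mul (hC x) (hD x) (abs_nonneg _) ((abs_nonneg _).trans (hC x))

lemma Polynomial.polyBounded_eval (p : ℝ[X]) : PolyBounded fun x => p.eval x := by
  refine ⟨∑ i ∈ Finset.range (p.natDegree + 1), |p.coeff i|, p.natDegree, fun x => ?_⟩
  dsimp only
  rw [eval_eq_sum_range, Finset.sum_mul]
  refine (Finset.abs_sum_le_sum_abs _ _).trans (Finset.sum_le_sum fun i hi => ?_)
  rw [abs_mul, abs_pow]
  gcongr
  calc |x| ^ i ≤ (1 + |x|) ^ i := by gcongr; linarith
    _ ≤ (1 + |x|) ^ p.natDegree :=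
      pow_le_pow_right₀ (by linarith [abs_nonneg x]) (Finset.mem_range_succ_iff.mp hi)

lemma PolyGrowth.polyBounded {f : ℝ → ℝ} (hg : PolyGrowth f) (hf : Continuous f) :
    PolyBounded f := by
  obtain ⟨m, hm, hlim⟩ := hg
  obtain ⟨K, hK, hfar⟩ := mem_cocompact.mp
    (hlim.eventually (Metric.closedBall_mem_nhds (0 : ℝ) one_pos))
  obtain ⟨C, hC⟩ := ((isCompact_closedBall (0 : ℝ) 1).union hK).exists_bound_of_continuousOn
    hf.continuousOn
  refine ⟨max C 1, ⌈m⌉₊, fun x => ?_⟩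
  have hone : 1 ≤ (1 + |x|) ^ ⌈m⌉₊ := one_le_pow₀ (le_add_of_nonneg_right (abs_nonneg x))
  by_cases hx : x ∈ Metric.closedBall 0 1 ∪ K
  · calc |f x| ≤ max C 1 := (hC x hx).trans (le_max_left _ _)
      _ ≤ _ := le_mul_of_one_le_right (by positivity) hone
  · rw [mem_union, not_or, Metric.mem_closedBall, dist_zero_right, norm_eq_abs, not_le] at hx
    have hpos : 0 < |x| ^ m := rpow_pos_of_pos (one_pos.trans hx.1) m
    have hdiv : dist (f x / |x| ^ m) 0 ≤ 1 := hfar hx.2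
    rw [dist_zero_right, norm_div, norm_of_nonneg hpos.le, div_le_one hpos] at hdiv
    calc |f x| ≤ |x| ^ m := hdiv
      _ ≤ (1 + |x|) ^ m := by gcongr; linarith
      _ ≤ (1 + |x|) ^ (⌈m⌉₊ : ℝ) := rpow_le_rpow_of_exponent_le (by linarith) (Nat.le_ceil m)
      _ = 1 * (1 + |x|) ^ ⌈m⌉₊ := by rw [rpow_natCast, one_mul]
      _ ≤ _ := by gcongr; exact le_max_right _ _

def GaussDominatedOn {ι : Type*} (F : ι → ℝ → ℝ) (s : Set ι) : Prop :=
  ∃ D b μ : ℝ, ∃ k : ℕ, 0 < b ∧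
    ∀ t ∈ s, ∀ x, |F t x| ≤ D * ((1 + |x|) ^ k * exp (-b * (x - μ) ^ 2))

namespace GaussDominatedOn

variable {ι ι' : Type*} {F : ι → ℝ → ℝ} {s : Set ι}

lemma comp (hF : GaussDominatedOn F s) {φ : ι' → ι} {s' : Set ι'} (hφ : MapsTo φ s' s) :
    GaussDominatedOn (fun t => F (φ t)) s' := by
  obtain ⟨D, b, μ, k, hb, hle⟩ := hF
  exact ⟨D, b, μ, k, hb, fun t ht => hle (φ t) (hφ ht)⟩

lemma mul_of_abs_le (hF : GaussDominatedOn F s) {G : ι → ℝ → ℝ} {C : ℝ} {n : ℕ}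
    (hG : ∀ t ∈ s, ∀ x, |G t x| ≤ C * (1 + |x|) ^ n) :
    GaussDominatedOn (fun t x => G t x * F t x) s := by
  obtain ⟨D, b, μ, k, hb, hle⟩ := hF
  refine ⟨C * D, b, μ, n + k, hb, fun t ht x => ?_⟩
  calc |G t x * F t x|
        ≤ C * (1 + |x|) ^ n * (D * ((1 + |x|) ^ k * exp (-b * (x - μ) ^ 2))) := by
        rw [abs_mul]
        exact mul_le_mul (hG t ht x) (hle t ht x) (abs_nonneg _) ((abs_nonneg _).trans (hG t ht x))
    _ = _ := by ring

lemma mul_left (hF : GaussDominatedOn F s) {g : ℝ → ℝ} (hg : PolyBounded g) :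
    GaussDominatedOn (fun t x => g x * F t x) s := by
  obtain ⟨C, n, hC⟩ := hg
  exact hF.mul_of_abs_le (G := fun _ => g) fun _ _ => hC

lemma integrable (hF : GaussDominatedOn F s) {t : ι} (ht : t ∈ s) (hFt : Continuous (F t)) :
    Integrable (F t) := by
  obtain ⟨D, b, μ, k, hb, hle⟩ := hF
  exact ((integrable_one_add_abs_pow_mul_exp_neg_mul_sub_sq hb k μ).const_mul D).mono'
    hFt.aestronglyMeasurable (ae_of_all _ (hle t ht))

end GaussDominatedOn

lemma hasDerivAt_integral_mul_of_gaussDominatedOn {g : ℝ → ℝ} (hg : Continuous g)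
    (hgb : PolyBounded g) {F F' : ℝ → ℝ → ℝ} {s : Set ℝ} {t₀ : ℝ} (hs : s ∈ 𝓝 t₀)
    (hF : ∀ t, Continuous (F t)) (hF' : Continuous (F' t₀))
    (hF₀ : Integrable fun x => g x * F t₀ x) (hF'_dom : GaussDominatedOn F' s)
    (hderiv : ∀ t ∈ s, ∀ x, HasDerivAt (F · x) (F' t x) t) :
    HasDerivAt (fun t => ∫ x, g x * F t x) (∫ x, g x * F' t₀ x) t₀ := by
  obtain ⟨D, b, μ, k, hb, hle⟩ := hF'_dom.mul_left hgb
  exact (hasDerivAt_integral_of_dominated_loc_of_deriv_le hs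
    (Eventually.of_forall fun t => (hg.mul (hF t)).aestronglyMeasurable) hF₀
    (hg.mul hF').aestronglyMeasurable (ae_of_all _ fun x t ht => hle t ht x)
    ((integrable_one_add_abs_pow_mul_exp_neg_mul_sub_sq hb k μ).const_mul D)
    (ae_of_all _ fun x t ht => (hderiv t ht x).const_mul (g x))).2

lemma continuous_gauss (μ σ : ℝ) : Continuous (gauss μ σ) := by
  unfold gauss; fun_prop

lemma gauss_nonneg {σ : ℝ} (hσ : 0 ≤ σ) (μ x : ℝ) : 0 ≤ gauss μ σ x := by
  unfold gauss; positivity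

lemma gaussDominatedOn_gauss {σ : ℝ} (hσ : 0 < σ) (μ : ℝ) :
    GaussDominatedOn (fun p : ℝ × ℝ => gauss p.1 p.2)
      (Icc (μ - 1) (μ + 1) ×ˢ Icc (σ / 2) (2 * σ)) := by
  refine ⟨2 / (√(2 * π) * σ) * exp (1 / (8 * σ ^ 2)), 1 / (16 * σ ^ 2), μ, 0, by positivity,
    fun ⟨m, s⟩ ⟨⟨hm₁, hm₂⟩, hs₁, hs₂⟩ x => ?_⟩
  have hs : 0 < s := by linarith
  have hsq : (x - μ) ^ 2 ≤ 2 * (x - m) ^ 2 + 2 := by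
    nlinarith [sq_nonneg (x - 2 * m + μ)]
  -- `s ≤ 2σ` widens the Gaussian to variance `4σ²`; moving its centre by at most `1` then costs
  -- the factor `exp (1 / (8σ²))` and half of the exponent.
  have hexp :
      -(x - m) ^ 2 / (2 * s ^ 2) ≤ 1 / (8 * σ ^ 2) + -(1 / (16 * σ ^ 2)) * (x - μ) ^ 2 := by
    have h₁ : (x - m) ^ 2 / (8 * σ ^ 2) ≤ (x - m) ^ 2 / (2 * s ^ 2) :=
      div_le_div_of_nonneg_left (sq_nonneg _) (by positivity) (by nlinarith)
    have h₂ : (x - μ) ^ 2 / (16 * σ ^ 2) ≤ (x - m) ^ 2 / (8 * σ ^ 2) + 1 / (8 * σ ^ 2) := by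
      rw [← add_div, div_le_div_iff₀ (by positivity) (by positivity)]
      nlinarith
    have h₃ : -(x - m) ^ 2 / (2 * s ^ 2) = -((x - m) ^ 2 / (2 * s ^ 2)) := neg_div _ _
    have h₄ : -(1 / (16 * σ ^ 2)) * (x - μ) ^ 2 = -((x - μ) ^ 2 / (16 * σ ^ 2)) := by ring
    linarith
  have hpre : 1 / (√(2 * π) * s) ≤ 2 / (√(2 * π) * σ) := by
    have : 0 < √(2 * π) := by positivity
    rw [div_le_div_iff₀ (by positivity) (by positivity)]
    nlinarith
  rw [pow_zero, one_mul, abs_of_nonneg (gauss_nonneg hs.le m x)]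
  calc gauss m s x = exp (-(x - m) ^ 2 / (2 * s ^ 2)) * (1 / (√(2 * π) * s)) := by
        rw [gauss, mul_one_div]
    _ ≤ exp (1 / (8 * σ ^ 2) + -(1 / (16 * σ ^ 2)) * (x - μ) ^ 2) * (2 / (√(2 * π) * σ)) := by
        gcongr
    _ = _ := by rw [exp_add]; ring

/-- The score `∂_μ log gauss μ σ x`, a polynomial in `x`. -/
noncomputable def meanScore (μ σ : ℝ) : ℝ[X] := C (σ ^ 2)⁻¹ * (X - C μ)

/-- The score `∂_σ log gauss μ σ x`, a polynomial in `x`. -/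
noncomputable def scaleScore (μ σ : ℝ) : ℝ[X] := C (σ ^ 3)⁻¹ * (X - C μ) ^ 2 - C σ⁻¹

lemma eval_meanScore (μ σ x : ℝ) : (meanScore μ σ).eval x = (x - μ) / σ ^ 2 := by
  simp [meanScore, div_eq_inv_mul]

lemma eval_scaleScore (μ σ x : ℝ) :
    (scaleScore μ σ).eval x = (x - μ) ^ 2 / σ ^ 3 - 1 / σ := by
  simp [scaleScore, div_eq_inv_mul]

lemma natDegree_meanScore_le (μ σ : ℝ) : (meanScore μ σ).natDegree ≤ 2 := by
  unfold meanScore; compute_degree!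

lemma natDegree_scaleScore_le (μ σ : ℝ) : (scaleScore μ σ).natDegree ≤ 2 := by
  unfold scaleScore; compute_degree!

lemma hasDerivAt_gauss_mean {σ : ℝ} (hσ : σ ≠ 0) (x m : ℝ) :
    HasDerivAt (fun m => gauss m σ x) ((meanScore m σ).eval x * gauss m σ x) m := by
  have h := ((((hasDerivAt_id m).const_sub x).pow 2).neg.div_const (2 * σ ^ 2)).exp.div_const
    (√(2 * π) * σ)
  refine h.congr_deriv ?_
  simp only [Pi.pow_apply, Pi.neg_apply, id, eval_meanScore, gauss]
  field_simp
  ring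

lemma hasDerivAt_gauss_scale (μ x : ℝ) {s : ℝ} (hs : s ≠ 0) :
    HasDerivAt (fun s => gauss μ s x) ((scaleScore μ s).eval x * gauss μ s x) s := by
  have hsqrt : √(2 * π) ≠ 0 := by positivity
  have h := ((hasDerivAt_const s (-(x - μ) ^ 2)).div ((hasDerivAt_pow 2 s).const_mul 2)
    (by positivity)).exp.div ((hasDerivAt_id s).const_mul (√(2 * π))) (mul_ne_zero hsqrt hs)
  refine h.congr_deriv ?_
  simp only [Pi.div_apply, id, eval_scaleScore, gauss]
  field_simp
  ring

lemma abs_eval_meanScore_le {μ m σ : ℝ} (hm : m ∈ Icc (μ - 1) (μ + 1)) (x : ℝ) :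
    |(meanScore m σ).eval x| ≤ (2 + |μ|) / σ ^ 2 * (1 + |x|) ^ 1 := by
  have hm' : |m| ≤ 1 + |μ| := by
    have := abs_sub_abs_le_abs_sub m μ
    have := abs_le.mpr (⟨by linarith [hm.1], by linarith [hm.2]⟩ : -1 ≤ m - μ ∧ m - μ ≤ 1)
    linarith
  rw [eval_meanScore, abs_div, abs_of_nonneg (sq_nonneg σ), pow_one, div_mul_eq_mul_div]
  gcongr
  calc |x - m| ≤ (1 + |m|) * (1 + |x|) := abs_sub_le_mul_one_add_abs x m
    _ ≤ (2 + |μ|) * (1 + |x|) := mul_le_mul_of_nonneg_right (by linarith) (by positivity)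

lemma abs_eval_scaleScore_le {μ σ s : ℝ} (hσ : 0 < σ) (hs : σ / 2 ≤ s) (x : ℝ) :
    |(scaleScore μ s).eval x| ≤ (8 / σ ^ 3 + 2 / σ) * (1 + |μ|) ^ 2 * (1 + |x|) ^ 2 := by
  have hs₀ : 0 < s := by linarith
  have hsq : (x - μ) ^ 2 ≤ (1 + |μ|) ^ 2 * (1 + |x|) ^ 2 := by
    rw [← mul_pow, ← sq_abs]
    exact pow_le_pow_left₀ (abs_nonneg _) (abs_sub_le_mul_one_add_abs x μ) 2
  have hone : 1 ≤ (1 + |μ|) ^ 2 * (1 + |x|) ^ 2 := by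
    rw [← mul_pow]; exact one_le_pow₀ (by nlinarith [abs_nonneg μ, abs_nonneg x])
  have hinv₃ : 1 / s ^ 3 ≤ 8 / σ ^ 3 := by
    rw [div_le_div_iff₀ (by positivity) (by positivity)]
    nlinarith [pow_le_pow_left₀ (by positivity) hs 3]
  have hinv₁ : 1 / s ≤ 2 / σ := by
    rw [div_le_div_iff₀ hs₀ hσ]; linarith
  rw [eval_scaleScore]
  calc |(x - μ) ^ 2 / s ^ 3 - 1 / s| ≤ 1 / s ^ 3 * (x - μ) ^ 2 + 1 / s := by
        refine (abs_sub _ _).trans ?_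
        rw [abs_of_nonneg (by positivity), abs_of_nonneg (by positivity), one_div_mul_eq_div]
    _ ≤ 8 / σ ^ 3 * ((1 + |μ|) ^ 2 * (1 + |x|) ^ 2) + 2 / σ * ((1 + |μ|) ^ 2 * (1 + |x|) ^ 2) := by
        gcongr
        exact hinv₁.trans (le_mul_of_one_le_right (by positivity) hone)
    _ = _ := by ring

lemma integrable_mul_gauss {g : ℝ → ℝ} (hg : Continuous g) (hgb : PolyBounded g) (μ : ℝ)
    {σ : ℝ} (hσ : 0 < σ) : Integrable fun x => g x * gauss μ σ x :=
  ((gaussDominatedOn_gauss hσ μ).mul_left hgb).integrable (t := (μ, σ))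
    ⟨⟨by linarith, by linarith⟩, by linarith, by linarith⟩ (hg.mul (continuous_gauss μ σ))

theorem hasDerivAt_relaxF_mean {g : ℝ → ℝ} (hg : Continuous g) (hgb : PolyBounded g) (μ : ℝ)
    {σ : ℝ} (hσ : 0 < σ) :
    HasDerivAt (fun m => relaxF g m σ) (relaxF (fun x => g x * (meanScore μ σ).eval x) μ σ) μ := by
  have hdom : GaussDominatedOn (fun m x => (meanScore m σ).eval x * gauss m σ x)
      (Icc (μ - 1) (μ + 1)) :=
    ((gaussDominatedOn_gauss hσ μ).comp (φ := fun m => (m, σ))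
      fun m hm => ⟨hm, by linarith, by linarith⟩).mul_of_abs_le
      fun m hm => abs_eval_meanScore_le hm
  have h := hasDerivAt_integral_mul_of_gaussDominatedOn hg hgb
    (Icc_mem_nhds (by linarith) (by linarith)) (continuous_gauss · σ)
    ((Polynomial.continuous _).mul (continuous_gauss μ σ)) (integrable_mul_gauss hg hgb μ hσ)
    hdom fun m _ x => hasDerivAt_gauss_mean hσ.ne' x m
  simpa only [relaxF, mul_assoc] using h

theorem hasDerivAt_relaxF_scale {g : ℝ → ℝ} (hg : Continuous g) (hgb : PolyBounded g) (μ : ℝ)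
    {σ : ℝ} (hσ : 0 < σ) :
    HasDerivAt (fun s => relaxF g μ s) (relaxF (fun x => g x * (scaleScore μ σ).eval x) μ σ) σ := by
  have hdom : GaussDominatedOn (fun s x => (scaleScore μ s).eval x * gauss μ s x)
      (Icc (σ / 2) (2 * σ)) :=
    ((gaussDominatedOn_gauss hσ μ).comp (φ := fun s => (μ, s))
      fun s hs => ⟨⟨by linarith, by linarith⟩, hs⟩).mul_of_abs_le
      fun s hs => abs_eval_scaleScore_le hσ hs.1
  have h := hasDerivAt_integral_mul_of_gaussDominatedOn hg hgb
    (Icc_mem_nhds (by linarith) (by linarith)) (continuous_gauss μ ·)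
    ((Polynomial.continuous _).mul (continuous_gauss μ σ)) (integrable_mul_gauss hg hgb μ hσ)
    hdom fun s hs x => hasDerivAt_gauss_scale μ x (by linarith [hs.1] : s ≠ 0)
  simpa only [relaxF, mul_assoc] using h

lemma relaxF_mul_eval_eq_of_integral_eq_zero {f q : ℝ → ℝ} (hf : Continuous f)
    (hfb : PolyBounded f) (hq : Continuous q) (hqb : PolyBounded q) {μ σ : ℝ} (hσ : 0 < σ)
    (p : ℝ[X]) (horth : ∫ x, p.eval x * (q x - f x) * gauss μ σ x = 0) :
    relaxF (fun x => f x * p.eval x) μ σ = relaxF (fun x => q x * p.eval x) μ σ := by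
  have hint {g : ℝ → ℝ} (hg : Continuous g) (hgb : PolyBounded g) :
      Integrable fun x => g x * p.eval x * gauss μ σ x :=
    integrable_mul_gauss (g := fun x => g x * p.eval x) (hg.mul p.continuous)
      (hgb.mul p.polyBounded_eval) μ hσ
  rw [relaxF, relaxF, ← sub_eq_zero, ← integral_sub (hint hf hfb) (hint hq hqb), ← neg_eq_zero,
    ← integral_neg, ← horth]
  congr 1 with x
  ring

theorem stmt9 (f : ℝ → ℝ) (hf : Continuous f) (hg : PolyGrowth f)
    (μ₀ σ₀ : ℝ) (hσ₀ : 0 < σ₀)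
    (a b c : ℝ) (q : ℝ → ℝ) (hq : q = fun x => a + b * x + c * x^2)
    (hopt : ∀ p : Polynomial ℝ, p.natDegree ≤ 2 →
      ∫ x : ℝ, p.eval x * (q x - f x) * gauss μ₀ σ₀ x = 0) :
    deriv (fun m => relaxF f m σ₀) μ₀ = deriv (fun m => relaxF q m σ₀) μ₀ ∧
    deriv (fun s => relaxF f μ₀ s) σ₀ = deriv (fun s => relaxF q μ₀ s) σ₀ := by
  have hfb : PolyBounded f := hg.polyBounded hf
  have hq_eval : q = fun x => (C a + C b * X + C c * X ^ 2).eval x := by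
    rw [hq]; ext; simp
  have hqc : Continuous q := hq_eval ▸ Polynomial.continuous _
  have hqb : PolyBounded q := hq_eval ▸ Polynomial.polyBounded_eval _
  have hproj (p : ℝ[X]) (hp : p.natDegree ≤ 2) :=
    relaxF_mul_eval_eq_of_integral_eq_zero hf hfb hqc hqb hσ₀ p (hopt p hp)
  constructor
  · rw [(hasDerivAt_relaxF_mean hf hfb μ₀ hσ₀).deriv,
      (hasDerivAt_relaxF_mean hqc hqb μ₀ hσ₀).deriv]
    exact hproj _ (natDegree_meanScore_le μ₀ σ₀)
  · rw [(hasDerivAt_relaxF_scale hf hfb μ₀ hσ₀).deriv,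
      (hasDerivAt_relaxF_scale hqc hqb μ₀ hσ₀).deriv]
    exact hproj _ (natDegree_scaleScore_le μ₀ σ₀)
end
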